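/- Fix ε > 0 and suppose Assumption 2.1 holds. If the spectral radius satisfies r_σ(L^ε) ≤ 1, then A ≡ 0 is the unique solution in L¹(ℝ^N) with A ≥ 0 a.e. of the fixed-point equation A = T^ε(A). -/

import Mathlib

open MeasureTheory Filter Topology ENNReal

noncomputable section

/-- Euclidean space `ℝ^N`. -/
abbrev Euc (N : ℕ) : Type := EuclideanSpace ℝ (Fin N)

/-- The rescaled mutation kernel `m_ε(x) = ε^{-N} m(x/ε)`. -/
noncomputable def mScaled {N : ℕ} (m : Euc N → ℝ) (ε : ℝ) (x : Euc N) : ℝ :=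
  (ε ^ N)⁻¹ * m (ε⁻¹ • x)

/-- The fitness function `Ψ(x) = β(x) r(x) / (δ (θ + d(x)))`. -/
noncomputable def fitness {N : ℕ} (δ θ : ℝ) (β r d : Euc N → ℝ) (x : Euc N) : ℝ :=
  β x * r x / (δ * (θ + d x))

/-- Pointwise formula for the linear operator `L_k^ε φ = (Λ ξ_k/θ) m_ε ⋆ (Ψ_k φ)`. -/
noncomputable def Lfun {N : ℕ} (Λ θ ξk : ℝ) (Ψk : Euc N → ℝ) (m : Euc N → ℝ)
    (ε : ℝ) (φ : Euc N → ℝ) (x : Euc N) : ℝ :=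
  (Λ * ξk / θ) * ∫ y, mScaled m ε (x - y) * (Ψk y * φ y)

/-- Pointwise formula for the nonlinear operator
`T^ε(φ) = Σ_k L_k^ε(φ) / (1 + θ⁻¹ ∫ β_k φ)`. -/
noncomputable def Tfun {N : ℕ} (Λ θ : ℝ) (ξ : Fin 2 → ℝ) (Ψ β : Fin 2 → Euc N → ℝ)
    (m : Euc N → ℝ) (ε : ℝ) (φ : Euc N → ℝ) (x : Euc N) : ℝ :=
  ∑ k : Fin 2, Lfun Λ θ (ξ k) (Ψ k) m ε φ x / (1 + θ⁻¹ * ∫ y, β k y * φ y)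

/-- Pointwise formula for the one-host nonlinear operator
`T_k^ε(φ) = L_k^ε(φ) / (1 + θ⁻¹ ∫ β_k φ)`. -/
noncomputable def Tkfun {N : ℕ} (Λ θ ξk : ℝ) (Ψk βk : Euc N → ℝ) (m : Euc N → ℝ)
    (ε : ℝ) (φ : Euc N → ℝ) (x : Euc N) : ℝ :=
  Lfun Λ θ ξk Ψk m ε φ x / (1 + θ⁻¹ * ∫ y, βk y * φ y)

/-- `q(ε) = o(ε^∞)` as `ε → 0⁺` : for every `n`, `ε^{-n} q(ε) → 0`. -/
def LittleOInfty (q : ℝ → ℝ) : Prop :=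
  ∀ n : ℕ, Tendsto (fun ε => q ε / ε ^ n) (𝓝[>] (0 : ℝ)) (𝓝 0)

/-- Assumption 2.1 of the paper. -/
structure Assumption1 {N : ℕ} (ξ : Fin 2 → ℝ) (Λ θ δ : ℝ)
    (β d r : Fin 2 → Euc N → ℝ) (m : Euc N → ℝ) : Prop where
  ξ_pos : ∀ k, 0 < ξ k
  ξ_sum : ξ 0 + ξ 1 = 1
  Λ_pos : 0 < Λ
  θ_pos : 0 < θ
  δ_pos : 0 < δ
  β_cont : ∀ k, Continuous (β k)
  β_nonneg : ∀ k x, 0 ≤ β k x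
  β_bdd : ∀ k, ∃ C, ∀ x, β k x ≤ C
  d_cont : ∀ k, Continuous (d k)
  d_nonneg : ∀ k x, 0 ≤ d k x
  d_bdd : ∀ k, ∃ C, ∀ x, d k x ≤ C
  r_cont : ∀ k, Continuous (r k)
  r_nonneg : ∀ k x, 0 ≤ r k x
  r_bdd : ∀ k, ∃ C, ∀ x, r k x ≤ C
  Ψ_ne : ∀ k, ∃ x, fitness δ θ (β k) (r k) (d k) x ≠ 0
  Ψ_lim : ∀ k, Tendsto (fitness δ θ (β k) (r k) (d k)) (cocompact (Euc N)) (𝓝 0)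
  m_int : Integrable m
  m_bdd : ∃ C, ∀ x, m x ≤ C
  m_pos : ∀ᵐ x, 0 < m x
  m_symm : ∀ᵐ x, m (-x) = m x
  m_mass : ∫ x, m x = 1
  m_sup_int : ∀ R > 0,
    Integrable (fun x => ⨆ y : Metric.closedBall (0 : Euc N) R, m (x + (y : Euc N)))

/-- Assumption 2.2 of the paper: fast decay of the kernel and separated compact supports. -/
structure Assumption2 {N : ℕ} (β : Fin 2 → Euc N → ℝ) (m : Euc N → ℝ) : Prop where
  m_decay : ∀ n : ℕ, Tendsto (fun x : Euc N => ‖x‖ ^ n * m x) (cocompact (Euc N)) (𝓝 0)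
  β_suppcompact : ∀ k, HasCompactSupport (β k)
  supp_sep : ∃ η > 0, ∀ x ∈ tsupport (β 0), ∀ y ∈ tsupport (β 1), η ≤ dist x y

/-- Assumption 2.3 of the paper (nonnegative real spectrum and spectral gap) for the
family of operators `Lop k ε` on `L¹(ℝ^N)`. -/
def Assumption3 {N : ℕ}
    (Lop : Fin 2 → ℝ →
      (Lp ℝ 1 (volume : Measure (Euc N)) →L[ℝ] Lp ℝ 1 (volume : Measure (Euc N)))) : Prop :=
  (∀ k : Fin 2, ∀ ε > (0 : ℝ), spectrum ℝ (Lop k ε) ⊆ Set.Ici (0 : ℝ) ∧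
      (spectralRadius ℝ (Lop k ε)).toReal ∈ spectrum ℝ (Lop k ε)) ∧
  (∀ k : Fin 2, ∃ n : ℕ,
    0 < Filter.liminf (fun ε : ℝ =>
      ((spectralRadius ℝ (Lop k ε)).toReal -
        sSup (spectrum ℝ (Lop k ε) \ {(spectralRadius ℝ (Lop k ε)).toReal})) / ε ^ n)
      (𝓝[>] (0 : ℝ)))

/-- `R_{0,k} = (ξ_k Λ/θ) ‖Ψ_k‖_{L^∞}`. -/
noncomputable def R0k {N : ℕ} (ξk Λ θ : ℝ) (Ψk : Euc N → ℝ) : ℝ :=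
  ξk * Λ / θ * ⨆ x, Ψk x

/-- `R₀ = (Λ/θ) ‖ξ₁Ψ₁ + ξ₂Ψ₂‖_{L^∞}`. -/
noncomputable def R0 {N : ℕ} (ξ : Fin 2 → ℝ) (Λ θ : ℝ) (Ψ : Fin 2 → Euc N → ℝ) : ℝ :=
  Λ / θ * ⨆ x, (ξ 0 * Ψ 0 x + ξ 1 * Ψ 1 x)

/-- `A` is a nontrivial nonnegative fixed point of `T^ε` in `L¹(ℝ^N)`. -/
def IsFixedPointAe {N : ℕ} (Λ θ : ℝ) (ξ : Fin 2 → ℝ) (Ψ β : Fin 2 → Euc N → ℝ)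
    (m : Euc N → ℝ) (ε : ℝ) (A : Euc N → ℝ) : Prop :=
  Integrable A ∧ (0 ≤ᵐ[volume] A) ∧ ¬ (A =ᵐ[volume] (0 : Euc N → ℝ)) ∧
    A =ᵐ[volume] Tfun Λ θ ξ Ψ β m ε A

/-- `φ` is the (a.e. positive, `L¹`-normalised) principal eigenfunction of `L_k^ε`,
associated with the eigenvalue `ρ`. -/
def IsPrincipalEigenfun {N : ℕ} (Λ θ ξk : ℝ) (Ψk : Euc N → ℝ) (m : Euc N → ℝ) (ε : ℝ)
    (ρ : ℝ) (φ : Euc N → ℝ) : Prop :=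
  Integrable φ ∧ (∀ᵐ x, 0 < φ x) ∧ (∫ x, |φ x|) = 1 ∧
    (∀ᵐ x, Lfun Λ θ ξk Ψk m ε φ x = ρ * φ x)

/-- `ν_k^ε = θ (r_σ(L_k^ε) − 1) / ∫ β_k φ_k^{ε,1}`. -/
noncomputable def nuk {N : ℕ} (θ : ℝ) (βk : Euc N → ℝ) (ρ : ℝ) (φ : Euc N → ℝ) : ℝ :=
  θ * (ρ - 1) / ∫ x, βk x * φ x


/-!
If both `∫ β_k A` vanish, so does every `L_k^ε A`, hence `A = T^ε A = 0`. Otherwise the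
denominators `1 + θ⁻¹ ∫ β_k A` of the terms of `T^ε A` that do not vanish are at least some
`c > 1`, so `c A ≤ L^ε A`. As `c > r_σ(L^ε)`, the resolvent `(c - L^ε)⁻¹` exists, and it is a
positive operator because `L^ε` is; applied to `(c - L^ε) A ≤ 0` it gives `A ≤ 0`.

Positivity of the resolvent follows by continuous induction downwards on `[c, ‖L^ε‖ + 1]`: it
holds above `‖L^ε‖` by the Neumann series, the set where it holds is closed, and it spreads a
little below each of its points by a second Neumann series. Over `ℝ` the spectral radius does not
control `‖(L^ε)ⁿ‖^{1/n}`, so the Neumann series at `c` itself is not available.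
-/

section PositiveOperators

variable {E : Type*} [NormedAddCommGroup E] [NormedSpace ℝ E] [PartialOrder E]

def PreservesNonneg (T : E →L[ℝ] E) : Prop := ∀ f : E, 0 ≤ f → 0 ≤ T f

namespace PreservesNonneg

variable {S T : E →L[ℝ] E}

lemma one : PreservesNonneg (1 : E →L[ℝ] E) := fun _ hf => hf

lemma mul (hS : PreservesNonneg S) (hT : PreservesNonneg T) : PreservesNonneg (S * T) :=
  fun f hf => hS _ (hT f hf)

lemma pow (hT : PreservesNonneg T) : ∀ n : ℕ, PreservesNonneg (T ^ n)
  | 0 => by simpa only [pow_zero] using one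
  | n + 1 => by simpa only [pow_succ] using (hT.pow n).mul hT

lemma smul [IsOrderedAddMonoid E] [PosSMulMono ℝ E] (hT : PreservesNonneg T) {a : ℝ} (ha : 0 ≤ a) :
    PreservesNonneg (a • T) :=
  fun f hf => smul_nonneg ha (hT f hf)

lemma tsum [IsOrderedAddMonoid E] [OrderClosedTopology E] {F : ℕ → E →L[ℝ] E} (hF : Summable F)
    (h : ∀ n, PreservesNonneg (F n)) : PreservesNonneg (∑' n, F n) := by
  intro f hf
  have happly : (∑' n, F n) f = ∑' n, F n f := (ContinuousLinearMap.apply ℝ E f).map_tsum hF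
  rw [happly]
  exact tsum_nonneg fun n => h n f hf

end PreservesNonneg

lemma isClosed_setOf_preservesNonneg [ClosedIciTopology E] :
    IsClosed {T : E →L[ℝ] E | PreservesNonneg T} := by
  simp only [PreservesNonneg, Set.ofPred_forall]
  exact isClosed_iInter fun f => isClosed_iInter fun _ =>
    isClosed_Ici.preimage (ContinuousLinearMap.apply ℝ E f).continuous

lemma PreservesNonneg.algebraMap [IsOrderedAddMonoid E] [PosSMulMono ℝ E] {a : ℝ} (ha : 0 ≤ a) :
    PreservesNonneg (algebraMap ℝ (E →L[ℝ] E) a) := by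
  rw [Algebra.algebraMap_eq_smul_one]
  exact PreservesNonneg.one.smul ha

variable [CompleteSpace E] [IsOrderedAddMonoid E] [OrderClosedTopology E]

/-- `(u - s)⁻¹ = (∑ (u⁻¹ s)ⁿ) u⁻¹`. -/
lemma preservesNonneg_inverse_sub (u : (E →L[ℝ] E)ˣ) (hu : PreservesNonneg (↑u⁻¹ : E →L[ℝ] E))
    {s : E →L[ℝ] E} (hs : PreservesNonneg s) (h : ‖(↑u⁻¹ : E →L[ℝ] E) * s‖ < 1) :
    PreservesNonneg (Ring.inverse ((u : E →L[ℝ] E) - s)) := by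
  have hfac : (↑u - s : E →L[ℝ] E) = ↑(u * Units.oneSub _ h) := by
    rw [Units.val_mul, Units.val_oneSub, mul_sub, mul_one, ← mul_assoc, Units.mul_inv, one_mul]
  rw [hfac, Ring.inverse_unit, mul_inv_rev, Units.val_mul]
  refine PreservesNonneg.mul ?_ hu
  exact PreservesNonneg.tsum (summable_geometric_of_norm_lt_one h) fun n => (hu.mul hs).pow n

variable [PosSMulMono ℝ E]

lemma preservesNonneg_resolvent_of_norm_lt {T : E →L[ℝ] E} (hT : PreservesNonneg T) {M : ℝ}
    (hM : ‖T‖ < M) : PreservesNonneg (resolvent T M) := by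
  have hM0 : 0 < M := (norm_nonneg T).trans_lt hM
  let u := Units.map (algebraMap ℝ (E →L[ℝ] E)).toMonoidHom (Units.mk0 M hM0.ne')
  have hu : (↑u⁻¹ : E →L[ℝ] E) = algebraMap ℝ _ M⁻¹ := rfl
  refine preservesNonneg_inverse_sub u (hu ▸ PreservesNonneg.algebraMap (inv_nonneg.2 hM0.le))
    hT ?_
  rw [hu, ← Algebra.smul_def, norm_smul, Real.norm_of_nonneg (inv_nonneg.2 hM0.le),
    inv_mul_lt_one₀ hM0]
  exact hM

/-- `resolvent T μ = (∑ ((x - μ) R)ⁿ) R` with `R = resolvent T x`, for `μ ≤ x` close to `x`. -/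
lemma eventually_preservesNonneg_resolvent {T : E →L[ℝ] E} {x : ℝ} (hx : x ∈ resolventSet ℝ T)
    (hR : PreservesNonneg (resolvent T x)) :
    ∀ᶠ μ in 𝓝[≤] x, PreservesNonneg (resolvent T μ) := by
  have hRu : (↑hx.unit⁻¹ : E →L[ℝ] E) = resolvent T x := by
    have h := Ring.inverse_unit hx.unit
    rw [hx.unit_spec] at h
    exact h.symm
  have hsmall : ∀ᶠ μ in 𝓝 x, (x - μ) * ‖resolvent T x‖ < 1 := by
    have hcont : Continuous fun μ : ℝ => (x - μ) * ‖resolvent T x‖ := by fun_prop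
    exact hcont.continuousAt.eventually_lt continuousAt_const (by simp)
  filter_upwards [self_mem_nhdsWithin, nhdsWithin_le_nhds hsmall] with μ (hμ : μ ≤ x) hμs
  have hsub : (↑hx.unit : E →L[ℝ] E) - algebraMap ℝ _ (x - μ) = algebraMap ℝ _ μ - T := by
    rw [hx.unit_spec, map_sub]; abel
  rw [resolvent, ← hsub]
  refine preservesNonneg_inverse_sub _ (hRu ▸ hR) (.algebraMap (sub_nonneg.2 hμ)) ?_
  rwa [hRu, ← Algebra.commutes, ← Algebra.smul_def, norm_smul,
    Real.norm_of_nonneg (sub_nonneg.2 hμ)]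

/-- Continuous induction downwards from `‖T‖ + 1`, where the Neumann series is positive. -/
lemma preservesNonneg_resolvent {T : E →L[ℝ] E} (hT : PreservesNonneg T) {c : ℝ}
    (hc : Set.Ici c ⊆ resolventSet ℝ T) : PreservesNonneg (resolvent T c) := by
  set M := max c (‖T‖ + 1)
  set s := {μ : ℝ | PreservesNonneg (resolvent T μ)}
  have hclosed : IsClosed (s ∩ Set.Icc c M) := by
    have hcont : ContinuousOn (resolvent T) (Set.Icc c M) := fun μ hμ =>
      (spectrum.hasDerivAt_resolvent_const_left (hc hμ.1)).continuousAt.continuousWithinAt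
    rw [Set.inter_comm]
    exact hcont.preimage_isClosed_of_isClosed isClosed_Icc isClosed_setOf_preservesNonneg
  refine hclosed.mem_of_ge_of_forall_exists_lt ?_ (le_max_left _ _) fun x hx => ?_
  · exact preservesNonneg_resolvent_of_norm_lt hT ((lt_add_one _).trans_le (le_max_right _ _))
  · have hev := (eventually_preservesNonneg_resolvent (hc hx.2.1.le) hx.1).filter_mono
      (nhdsWithin_mono x Set.Iio_subset_Iic_self)
    exact (hev.and (Ico_mem_nhdsLT hx.2.1)).exists

lemma eq_zero_of_smul_le_apply {T : E →L[ℝ] E} (hT : PreservesNonneg T) {c : ℝ}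
    (hc : spectralRadius ℝ T < ENNReal.ofReal c) {f : E} (hf : 0 ≤ f) (hcf : c • f ≤ T f) :
    f = 0 := by
  have hres : Set.Ici c ⊆ resolventSet ℝ T := fun μ hμ => by
    refine spectrum.mem_resolventSet_of_spectralRadius_lt (hc.trans_le ?_)
    exact ENNReal.ofReal_le_of_le_toReal (by simpa using hμ.out.trans (le_abs_self μ))
  have hinv : resolvent T c * (algebraMap ℝ _ c - T) = 1 :=
    Ring.inverse_mul_cancel _ (spectrum.mem_resolventSet_iff.1 (hres Set.self_mem_Ici))
  have hle : f ≤ 0 := by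
    have happ : resolvent T c (T f - c • f) = -f := by
      have hcT : T f - c • f = -((algebraMap ℝ _ c - T) f) := by
        simp [Algebra.algebraMap_eq_smul_one]
      rw [hcT, map_neg, ← mul_apply_eq_comp, hinv, one_apply_eq_self]
    have := preservesNonneg_resolvent hT hres _ (sub_nonneg.2 hcf)
    rwa [happ, neg_nonneg] at this
  exact le_antisymm hle hf

end PositiveOperators

section Model

instance {α : Type*} [MeasurableSpace α] {μ : Measure α} {p : ℝ≥0∞} :
    PosSMulMono ℝ (Lp ℝ p μ) :=
  ⟨fun a ha f g hfg => by
    rw [← Lp.coeFn_le] at hfg ⊢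
    filter_upwards [hfg, Lp.coeFn_smul a f, Lp.coeFn_smul a g] with x hx hf hg
    rw [hf, hg]
    exact smul_le_smul_of_nonneg_left hx ha⟩

lemma preservesNonneg_of_coeFn_ae_eq {α : Type*} [MeasurableSpace α] {μ : Measure α}
    {p : ℝ≥0∞} [Fact (1 ≤ p)] {T : Lp ℝ p μ →L[ℝ] Lp ℝ p μ} {G : (α → ℝ) → α → ℝ}
    (hT : ∀ φ : Lp ℝ p μ, T φ =ᵐ[μ] G φ) (hG : ∀ φ : α → ℝ, 0 ≤ᵐ[μ] φ → ∀ x, 0 ≤ G φ x) :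
    PreservesNonneg T := by
  intro f hf
  rw [← Lp.coeFn_nonneg] at hf ⊢
  filter_upwards [hT f] with x hx
  exact hx ▸ hG f hf x

lemma ae_eq_zero_of_ae_mul_le_apply {α : Type*} [MeasurableSpace α] {μ : Measure α}
    {p : ℝ≥0∞} [Fact (1 ≤ p)] {T : Lp ℝ p μ →L[ℝ] Lp ℝ p μ} (hT : PreservesNonneg T) {c : ℝ}
    (hc : spectralRadius ℝ T < ENNReal.ofReal c) {A : α → ℝ} (hA : MemLp A p μ)
    (hA0 : 0 ≤ᵐ[μ] A) (hcA : ∀ᵐ x ∂μ, c * A x ≤ T (hA.toLp A) x) : A =ᵐ[μ] 0 := by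
  have hAe : hA.toLp A =ᵐ[μ] A := hA.coeFn_toLp
  have hzero : hA.toLp A = 0 := by
    refine eq_zero_of_smul_le_apply hT hc ?_ ?_
    · rw [← Lp.coeFn_nonneg]
      filter_upwards [hA0, hAe] with x hx he
      rwa [he]
    · rw [← Lp.coeFn_le]
      filter_upwards [hcA, hAe, Lp.coeFn_smul c (hA.toLp A)] with x hx he hs
      rwa [hs, Pi.smul_apply, he, smul_eq_mul]
  calc A =ᵐ[μ] hA.toLp A := hAe.symm
    _ =ᵐ[μ] 0 := by rw [hzero]; exact Lp.coeFn_zero ℝ p μ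

lemma exists_pos_forall_eq_zero_or_le {ι : Type*} [Fintype ι] {I : ι → ℝ}
    (hI : ∀ k, 0 ≤ I k) (hne : ∃ k, I k ≠ 0) : ∃ a > 0, ∀ k, I k = 0 ∨ a ≤ I k := by
  classical
  obtain ⟨k₀, hk₀⟩ := hne
  have hs : (Finset.univ.filter fun k => I k ≠ 0).Nonempty := ⟨k₀, by simpa using hk₀⟩
  refine ⟨_, (Finset.lt_inf'_iff hs).2 fun k hk => ?_, fun k => or_iff_not_imp_left.2 fun hk =>
    Finset.inf'_le _ (by simpa using hk)⟩
  exact (hI k).lt_of_ne' (by simpa using hk)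

variable {N : ℕ}

lemma mScaled_sub_nonneg_ae {m : Euc N → ℝ} (hm : ∀ᵐ x, 0 < m x) {ε : ℝ} (hε : 0 < ε)
    (x : Euc N) : ∀ᵐ y, 0 ≤ mScaled m ε (x - y) := by
  have hsub :=
    (Measure.measurePreserving_sub_left (volume : Measure (Euc N)) x).quasiMeasurePreserving
  have hsmul := Measure.quasiMeasurePreserving_smul (volume : Measure (Euc N)) (inv_ne_zero hε.ne')
  filter_upwards [(hsmul.comp hsub).ae hm] with y hy
  exact mul_nonneg (by positivity) hy.le

lemma Lfun_nonneg {Λ θ ξk ε : ℝ} {Ψk m φ : Euc N → ℝ} (hc : 0 ≤ Λ * ξk / θ)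
    (hΨ : ∀ y, 0 ≤ Ψk y) (hm : ∀ᵐ x, 0 < m x) (hε : 0 < ε) (hφ : 0 ≤ᵐ[volume] φ)
    (x : Euc N) : 0 ≤ Lfun Λ θ ξk Ψk m ε φ x := by
  refine mul_nonneg hc (integral_nonneg_of_ae ?_)
  filter_upwards [mScaled_sub_nonneg_ae hm hε x, hφ] with y hy hφy
  exact mul_nonneg hy (mul_nonneg (hΨ y) hφy)

lemma Lfun_congr_ae {Λ θ ξk ε : ℝ} {Ψk m φ ψ : Euc N → ℝ} (h : φ =ᵐ[volume] ψ) (x : Euc N) :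
    Lfun Λ θ ξk Ψk m ε φ x = Lfun Λ θ ξk Ψk m ε ψ x := by
  refine congrArg _ (integral_congr_ae ?_)
  filter_upwards [h] with y hy
  rw [hy]

lemma Lfun_eq_zero_of_mul_ae_eq_zero {Λ θ ξk ε : ℝ} {Ψk m φ : Euc N → ℝ}
    (h : (fun y => Ψk y * φ y) =ᵐ[volume] 0) (x : Euc N) : Lfun Λ θ ξk Ψk m ε φ x = 0 := by
  have h0 : (fun y => mScaled m ε (x - y) * (Ψk y * φ y)) =ᵐ[volume] fun _ => (0 : ℝ) := by
    filter_upwards [h] with y hy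
    rw [hy, Pi.zero_apply, mul_zero]
  rw [Lfun, integral_congr_ae h0, integral_zero, mul_zero]

lemma mul_Tfun_le_sum_Lfun {Λ θ ε c : ℝ} {ξ : Fin 2 → ℝ} {Ψ β : Fin 2 → Euc N → ℝ}
    {m φ : Euc N → ℝ} (hc : 0 < c) (hL : ∀ k x, 0 ≤ Lfun Λ θ (ξ k) (Ψ k) m ε φ x)
    (hk : ∀ k, (∀ x, Lfun Λ θ (ξ k) (Ψ k) m ε φ x = 0) ∨ c ≤ 1 + θ⁻¹ * ∫ y, β k y * φ y)
    (x : Euc N) : c * Tfun Λ θ ξ Ψ β m ε φ x ≤ ∑ k, Lfun Λ θ (ξ k) (Ψ k) m ε φ x := by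
  rw [Tfun, Finset.mul_sum]
  refine Finset.sum_le_sum fun k _ => ?_
  rcases hk k with hzero | hden
  · simp [hzero x]
  · have hpos := hc.trans_le hden
    calc c * (Lfun Λ θ (ξ k) (Ψ k) m ε φ x / (1 + θ⁻¹ * ∫ y, β k y * φ y))
        ≤ (1 + θ⁻¹ * ∫ y, β k y * φ y) *
            (Lfun Λ θ (ξ k) (Ψ k) m ε φ x / (1 + θ⁻¹ * ∫ y, β k y * φ y)) :=
          mul_le_mul_of_nonneg_right hden (div_nonneg (hL k x) hpos.le)
      _ = Lfun Λ θ (ξ k) (Ψ k) m ε φ x := mul_div_cancel₀ _ hpos.ne'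

namespace Assumption1

variable {ξ : Fin 2 → ℝ} {Λ θ δ : ℝ} {β d r : Fin 2 → Euc N → ℝ} {m : Euc N → ℝ}
  (h : Assumption1 ξ Λ θ δ β d r m)
include h

lemma coeff_nonneg (k : Fin 2) : 0 ≤ Λ * ξ k / θ :=
  div_nonneg (mul_nonneg h.Λ_pos.le (h.ξ_pos k).le) h.θ_pos.le

lemma fitness_nonneg (k : Fin 2) (x : Euc N) : 0 ≤ fitness δ θ (β k) (r k) (d k) x :=
  div_nonneg (mul_nonneg (h.β_nonneg k x) (h.r_nonneg k x))
    (mul_nonneg h.δ_pos.le (add_nonneg h.θ_pos.le (h.d_nonneg k x)))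

lemma integrable_mul {A : Euc N → ℝ} (hA : Integrable A) (k : Fin 2) :
    Integrable fun y => β k y * A y := by
  obtain ⟨C, hC⟩ := h.β_bdd k
  refine hA.bdd_mul (h.β_cont k).aestronglyMeasurable (c := C) (.of_forall fun y => ?_)
  rw [Real.norm_of_nonneg (h.β_nonneg k y)]
  exact hC y

/-- `Ψ_k A = (β_k A) r_k / (δ (θ + d_k))` vanishes wherever `β_k A` does. -/
lemma Lfun_fitness_eq_zero {ε : ℝ} {A : Euc N → ℝ} (hA : Integrable A) (hA0 : 0 ≤ᵐ[volume] A)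
    {k : Fin 2} (hk : ∫ y, β k y * A y = 0) (x : Euc N) :
    Lfun Λ θ (ξ k) (fitness δ θ (β k) (r k) (d k)) m ε A x = 0 := by
  have hβA0 : 0 ≤ᵐ[volume] fun y => β k y * A y := by
    filter_upwards [hA0] with y hy
    exact mul_nonneg (h.β_nonneg k y) hy
  have hβA := (integral_eq_zero_iff_of_nonneg_ae hβA0 (h.integrable_mul hA k)).1 hk
  refine Lfun_eq_zero_of_mul_ae_eq_zero ?_ x
  filter_upwards [hβA] with y hy
  have hy' : β k y * A y = 0 := hy
  calc fitness δ θ (β k) (r k) (d k) y * A y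
      = β k y * A y * (r k y / (δ * (θ + d k y))) := by rw [fitness]; ring
    _ = 0 := by rw [hy', zero_mul]

end Assumption1

end Model

theorem statement0_general {N : ℕ} (ξ : Fin 2 → ℝ) (Λ θ δ : ℝ)
    (β d r : Fin 2 → Euc N → ℝ) (m : Euc N → ℝ)
    (h1 : Assumption1 ξ Λ θ δ β d r m)
    (Ψ : Fin 2 → Euc N → ℝ) (hΨ : ∀ k, Ψ k = fitness δ θ (β k) (r k) (d k))
    (ε : ℝ) (hε : 0 < ε)
    (Lop : Lp ℝ 1 (volume : Measure (Euc N)) →L[ℝ] Lp ℝ 1 (volume : Measure (Euc N)))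
    (hLop : ∀ φ : Lp ℝ 1 (volume : Measure (Euc N)),
      (Lop φ : Euc N → ℝ) =ᵐ[volume]
        fun x => Lfun Λ θ (ξ 0) (Ψ 0) m ε (⇑φ) x + Lfun Λ θ (ξ 1) (Ψ 1) m ε (⇑φ) x)
    (hr : spectralRadius ℝ Lop ≤ 1)
    (A : Euc N → ℝ) (hAint : Integrable A) (hAnn : 0 ≤ᵐ[volume] A)
    (hfix : A =ᵐ[volume] Tfun Λ θ ξ Ψ β m ε A) :
    A =ᵐ[volume] (0 : Euc N → ℝ) := by
  have hL : ∀ k φ, 0 ≤ᵐ[volume] φ → ∀ x, 0 ≤ Lfun Λ θ (ξ k) (Ψ k) m ε φ x := fun k φ hφ x =>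
    Lfun_nonneg (h1.coeff_nonneg k) (hΨ k ▸ h1.fitness_nonneg k) h1.m_pos hε hφ x
  have hvanish : ∀ k, ∫ y, β k y * A y = 0 → ∀ x, Lfun Λ θ (ξ k) (Ψ k) m ε A x = 0 :=
    fun k hk x => hΨ k ▸ h1.Lfun_fitness_eq_zero hAint hAnn hk x
  by_cases hall : ∀ k, ∫ y, β k y * A y = 0
  · filter_upwards [hfix] with x hx
    simp [hx, Tfun, hvanish _ (hall _) x]
  push Not at hall
  obtain ⟨a, ha, hak⟩ := exists_pos_forall_eq_zero_or_le
    (fun k => integral_nonneg_of_ae (hAnn.mono fun y hy => mul_nonneg (h1.β_nonneg k y) hy)) hall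
  have hc : 1 < 1 + θ⁻¹ * a := lt_add_of_pos_right _ (mul_pos (inv_pos.2 h1.θ_pos) ha)
  have hA1 : MemLp A 1 volume := memLp_one_iff_integrable.2 hAint
  refine ae_eq_zero_of_ae_mul_le_apply
    (preservesNonneg_of_coeFn_ae_eq hLop fun φ hφ x => add_nonneg (hL 0 φ hφ x) (hL 1 φ hφ x))
    (hr.trans_lt (ENNReal.one_lt_ofReal.2 hc)) hA1 hAnn ?_
  filter_upwards [hfix, hLop (hA1.toLp A)] with x hfx hLx
  rw [hLx, Lfun_congr_ae hA1.coeFn_toLp, Lfun_congr_ae hA1.coeFn_toLp, hfx, ← Fin.sum_univ_two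
    (f := fun k => Lfun Λ θ (ξ k) (Ψ k) m ε A x)]
  refine mul_Tfun_le_sum_Lfun (by linarith) (fun k => hL k A hAnn) (fun k => ?_) x
  exact (hak k).imp (hvanish k) fun hle => by gcongr; exact (inv_pos.2 h1.θ_pos).le

/-- Theorem 2.2 (i).  Fix `ε > 0` and suppose Assumption 2.1 holds.
If the spectral radius of `L^ε = L₁^ε + L₂^ε` satisfies `r_σ(L^ε) ≤ 1`, then `A ≡ 0` is
the unique nonnegative solution in `L¹(ℝ^N)` of the fixed point equation `A = T^ε(A)`. -/
theorem statement0 {N : ℕ} (hN : 1 ≤ N) (ξ : Fin 2 → ℝ) (Λ θ δ : ℝ)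
    (β d r : Fin 2 → Euc N → ℝ) (m : Euc N → ℝ)
    (h1 : Assumption1 ξ Λ θ δ β d r m)
    (Ψ : Fin 2 → Euc N → ℝ) (hΨ : ∀ k, Ψ k = fitness δ θ (β k) (r k) (d k))
    (ε : ℝ) (hε : 0 < ε)
    (Lop : Lp ℝ 1 (volume : Measure (Euc N)) →L[ℝ] Lp ℝ 1 (volume : Measure (Euc N)))
    (hLop : ∀ φ : Lp ℝ 1 (volume : Measure (Euc N)),
      (Lop φ : Euc N → ℝ) =ᵐ[volume]
        fun x => Lfun Λ θ (ξ 0) (Ψ 0) m ε (⇑φ) x + Lfun Λ θ (ξ 1) (Ψ 1) m ε (⇑φ) x)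
    (hr : spectralRadius ℝ Lop ≤ 1)
    (A : Euc N → ℝ) (hAint : Integrable A) (hAnn : 0 ≤ᵐ[volume] A)
    (hfix : A =ᵐ[volume] Tfun Λ θ ξ Ψ β m ε A) :
    A =ᵐ[volume] (0 : Euc N → ℝ) :=
  statement0_general ξ Λ θ δ β d r m h1 Ψ hΨ ε hε Lop hLop hr A hAint hAnn hfix
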